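/- Let (A,B) satisfy the restricted {0,1,2,8} conditions (and the input assumptions of the type-one single column simulation), and let (A′,B′) be produced by the type-one single column simulation with K = 8. Then every column of A′ contains either at most three non-zero entries, all in {1,2}, with at most one 2, or a single entry 4 together with at most three entries 1; and every row of A′ contains either at most three entries 1, or a single entry 2 together with at most one entry 1, or exactly two entries 4 (all other entries 0). That is, A′ satisfies the column and row requirements of a stage 1 game. -/

import Mathlib

open Finset
open scoped Classical

/-- `(x, y)` is an `ε`-well-supported Nash equilibrium of the bimatrix game with
`nr` rows, `nc` columns and payoff matrices `A` (row player) and `B` (column player). -/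
def IsWSNE (nr nc : ℕ) (A B : ℕ → ℕ → ℝ) (x y : ℕ → ℝ) (ε : ℝ) : Prop :=
  (∀ i, 0 ≤ x i) ∧ (∀ i, nr ≤ i → x i = 0) ∧ (∑ i ∈ range nr, x i = 1) ∧
  (∀ j, 0 ≤ y j) ∧ (∀ j, nc ≤ j → y j = 0) ∧ (∑ j ∈ range nc, y j = 1) ∧
  (∀ i < nr, 0 < x i → ∀ i' < nr,
    ∑ j ∈ range nc, A i j * y j ≥ ∑ j ∈ range nc, A i' j * y j - ε) ∧
  (∀ j < nc, 0 < y j → ∀ j' < nc,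
    ∑ i ∈ range nr, x i * B i j ≥ ∑ i ∈ range nr, x i * B i j' - ε)

/-- Input assumptions of the type-one single column simulation: `(A,B)` has at most
`n` rows and columns (`nr` rows, `nc` columns), all entries in `[0,K]`, every row
and column of `A` and `B` has an entry `≥ 1`, the columns of `A` containing `K` are
exactly the columns `j < k`, each such column contains exactly one `K`, its other
non-zero entries lie in `{1,2}` and are either at most two values from `{1,2}` or
at most three `1`s. -/
def Scs1Input (n nr nc k : ℕ) (K : ℝ) (A B : ℕ → ℕ → ℝ) : Prop :=
  nr ≤ n ∧ nc ≤ n ∧ k ≤ nc ∧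
  (∀ i < nr, ∀ j < nc, 0 ≤ A i j ∧ A i j ≤ K) ∧
  (∀ i < nr, ∀ j < nc, 0 ≤ B i j ∧ B i j ≤ K) ∧
  (∀ i < nr, ∃ j < nc, 1 ≤ A i j) ∧ (∀ j < nc, ∃ i < nr, 1 ≤ A i j) ∧
  (∀ i < nr, ∃ j < nc, 1 ≤ B i j) ∧ (∀ j < nc, ∃ i < nr, 1 ≤ B i j) ∧
  (∀ j < k,
    ((range nr).filter fun i => A i j = K).card = 1 ∧
    (∀ i < nr, A i j = 0 ∨ A i j = 1 ∨ A i j = 2 ∨ A i j = K) ∧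
    (((range nr).filter fun i => A i j = 1 ∨ A i j = 2).card ≤ 2 ∨
      (((range nr).filter fun i => A i j = 1).card ≤ 3 ∧ ∀ i < nr, A i j ≠ 2))) ∧
  (∀ j, k ≤ j → j < nc → ∀ i < nr, A i j ≠ K)

/-- The row player's payoff matrix `A'` of the type-one single column simulation.
It has `2k + nr` rows and `2k + nc` columns.  For each `j < k`: the block
`(rbʲ, cb₁ʲ) = ({2j,2j+1}, {3j,3j+1})` equals `S = [[2,0],[0,1]]`, the block
`(rbʲ, cb₂ʲ) = ({2j,2j+1}, {3j+2})` is all ones, and the block `(rb_e, cb₁ʲ)`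
equals `encode(A_j)` (each `1` of column `A_j` kept as a `1` in the first column,
each `2` replaced by a `1` in the second column, the `K` replaced by `K/2` in the
second column).  Columns `c ≥ 3k` restricted to `rb_e` equal the columns
`A_{k}, …, A_{nc-1}`; all other entries are `0`. -/
noncomputable def scs1A (k : ℕ) (K : ℝ) (A : ℕ → ℕ → ℝ) : ℕ → ℕ → ℝ := fun r c =>
  if r < 2*k then
    if c = 3*(r/2) then (if r % 2 = 0 then 2 else 0)
    else if c = 3*(r/2) + 1 then (if r % 2 = 0 then 0 else 1)
    else if c = 3*(r/2) + 2 then 1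
    else 0
  else
    if c < 3*k then
      (if c % 3 = 0 then (if A (r - 2*k) (c/3) = 1 then 1 else 0)
       else if c % 3 = 1 then
         (if A (r - 2*k) (c/3) = K then K/2
          else if A (r - 2*k) (c/3) = 2 then 1 else 0)
       else 0)
    else A (r - 2*k) (c - 2*k)

/-- The column player's payoff matrix `B'` of the type-one single column
simulation: for `j < k` the block `(rbʲ, cb₁ʲ)` equals `T = [[0,1],[1,0]]` and the
block `(rb_e, cb₂ʲ)` equals column `B_j`; columns `c ≥ 3k` restricted to `rb_e`
equal the columns `B_k, …, B_{nc-1}`; all other entries are `0`. -/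
noncomputable def scs1B (k : ℕ) (B : ℕ → ℕ → ℝ) : ℕ → ℕ → ℝ := fun r c =>
  if r < 2*k then
    if c = 3*(r/2) then (if r % 2 = 0 then 0 else 1)
    else if c = 3*(r/2) + 1 then (if r % 2 = 0 then 1 else 0)
    else 0
  else
    if c < 3*k then (if c % 3 = 2 then B (r - 2*k) (c/3) else 0)
    else B (r - 2*k) (c - 2*k)

/-- The (un-normalized) translated column strategy `y'`: for `j < k`,
`y'_j = y*_{3j}` if `P(cb₁ʲ) ≥ 11ε` and `0` otherwise; for `j ≥ k`,
`y'_j = y*_{3k + (j-k)}`. -/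
noncomputable def scs1Y (k : ℕ) (ε : ℝ) (ystar : ℕ → ℝ) : ℕ → ℝ := fun j =>
  if j < k then (if 11 * ε ≤ ystar (3*j) + ystar (3*j+1) then ystar (3*j) else 0)
  else ystar (2*k + j)

/-- The column condition of the restricted `{0,1,2,8}` bimatrix conditions. -/
def ResCol (nr : ℕ) (col : ℕ → ℝ) : Prop :=
  ((∀ i < nr, col i = 0 ∨ col i = 1) ∧
    1 ≤ ((range nr).filter fun i => col i = 1).card ∧
    ((range nr).filter fun i => col i = 1).card ≤ 2) ∨
  ((((range nr).filter fun i => col i = 8).card = 1) ∧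
    ((range nr).filter fun i => col i = 1 ∨ col i = 2).card ≤ 2 ∧
    ∀ i < nr, col i ∈ ({0, 1, 2, 8} : Set ℝ))

/-- The row condition of the restricted `{0,1,2,8}` bimatrix conditions. -/
def ResRow (nc : ℕ) (row : ℕ → ℝ) : Prop :=
  ((∀ j < nc, row j ∈ ({0, 1, 2} : Set ℝ)) ∧
    ((range nc).filter fun j => row j = 1 ∨ row j = 2).card ≤ 3) ∨
  ((((range nc).filter fun j => row j = 8).card = 2) ∧
    ∀ j < nc, row j ∈ ({0, 8} : Set ℝ))

/-- The bimatrix game `(A, B)` of size `m × m` satisfies the restricted `{0,1,2,8}`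
conditions. -/
def RestrictedGame (m : ℕ) (A B : ℕ → ℕ → ℝ) : Prop :=
  (∀ j < m, ResCol m (fun i => A i j)) ∧ (∀ i < m, ResCol m (fun j => B i j)) ∧
  (∀ i < m, ResRow m (fun j => A i j)) ∧ (∀ j < m, ResRow m (fun i => B i j))

/-- The column requirement of a stage 1 game: either (i) at most three non-zero
entries, all in `{1,2}`, with at most one `2`, or (ii) a single entry `4` together
with at most three entries `1` (all remaining entries are `0`). -/
def Stage1Col (nr : ℕ) (col : ℕ → ℝ) : Prop :=
  ((∀ i < nr, col i ∈ ({0, 1, 2} : Set ℝ)) ∧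
    ((range nr).filter fun i => col i ≠ 0).card ≤ 3 ∧
    ((range nr).filter fun i => col i = 2).card ≤ 1) ∨
  ((((range nr).filter fun i => col i = 4).card = 1) ∧
    ((range nr).filter fun i => col i = 1).card ≤ 3 ∧
    ∀ i < nr, col i ∈ ({0, 1, 4} : Set ℝ))

/-- The row requirement of a stage 1 game: either (i) at most three entries `1`, or
(ii) a single `2` with at most one `1`, or (iii) exactly two entries `4` (all
remaining entries are `0`). -/
def Stage1Row (nc : ℕ) (row : ℕ → ℝ) : Prop :=
  ((∀ j < nc, row j = 0 ∨ row j = 1) ∧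
    ((range nc).filter fun j => row j = 1).card ≤ 3) ∨
  ((((range nc).filter fun j => row j = 2).card = 1) ∧
    ((range nc).filter fun j => row j = 1).card ≤ 1 ∧
    ∀ j < nc, row j ∈ ({0, 1, 2} : Set ℝ)) ∨
  ((((range nc).filter fun j => row j = 4).card = 2) ∧
    ∀ j < nc, row j ∈ ({0, 4} : Set ℝ))

/-!
Every row and column of `A'` is checked block by block. A column of `A` containing the `8`
has at most two entries in `{1,2}`, so `encode` adds at most two `1`s below the single `2`
(column `3j`) or the single `1` (column `3j+1`, where the `8` becomes the unique `4`) of the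
gadget `S`; the columns of `A` without `8` are `0/1`-columns with at most two `1`s and are copied.
A row of `A` with entries in `{0,1,2}` becomes a `0/1`-row with as many non-zero entries, since
column `3j` records the `1`s and column `3j+1` the `2`s of the row; a row with two `8`s becomes a
row with two `4`s, because `8` occurs only in the columns `j < k`.
-/

lemma card_filter_range_add (a b : ℕ) (P : ℕ → Prop) [DecidablePred P] :
    #{r ∈ range (a + b) | P r} = #{r ∈ range a | P r} + #{i ∈ range b | P (a + i)} := by
  rw [range_add, filter_union, card_union_of_disjoint, filter_map, card_map]
  · rfl
  · exact disjoint_filter_filter (disjoint_left.2 fun x hx hx' => by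
      simp only [mem_range, mem_map, addLeftEmbedding_apply] at hx hx'
      omega)

lemma forall_lt_add_iff {a b : ℕ} {P : ℕ → Prop} :
    (∀ r < a + b, P r) ↔ (∀ r < a, P r) ∧ ∀ i < b, P (a + i) := by
  refine ⟨fun h => ⟨fun r hr => h r (by omega), fun i hi => h _ (by omega)⟩,
    fun ⟨h₁, h₂⟩ r hr => ?_⟩
  rcases lt_or_ge r a with hra | hra
  · exact h₁ r hra
  · simpa [Nat.add_sub_cancel' hra] using h₂ (r - a) (by omega)

lemma exists_eq_two_mul_of_lt {r k : ℕ} (hr : r < 2 * k) :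
    ∃ j < k, r = 2 * j ∨ r = 2 * j + 1 :=
  ⟨r / 2, by omega, by omega⟩

lemma exists_eq_three_mul_of_lt {c k : ℕ} (hc : c < 3 * k) :
    ∃ j < k, c = 3 * j ∨ c = 3 * j + 1 ∨ c = 3 * j + 2 :=
  ⟨c / 3, by omega, by omega⟩

lemma card_filter_le_card_of_imp {α : Type*} {s t : Finset α} {P : α → Prop} [DecidablePred P]
    (h : ∀ x ∈ s, P x → x ∈ t) : #{x ∈ s | P x} ≤ #t :=
  card_le_card fun x hx => h x (mem_filter.1 hx).1 (mem_filter.1 hx).2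

section Entries

variable {k : ℕ} {K : ℝ} {A : ℕ → ℕ → ℝ}

lemma scs1A_two_mul {j : ℕ} (hj : j < k) (c : ℕ) :
    scs1A k K A (2 * j) c = if c = 3 * j then 2 else if c = 3 * j + 2 then 1 else 0 := by
  simp only [scs1A, if_pos (show 2 * j < 2 * k by omega)]
  split_ifs <;> first | rfl | omega

lemma scs1A_two_mul_add_one {j : ℕ} (hj : j < k) (c : ℕ) :
    scs1A k K A (2 * j + 1) c = if c = 3 * j + 1 ∨ c = 3 * j + 2 then 1 else 0 := by
  simp only [scs1A, if_pos (show 2 * j + 1 < 2 * k by omega)]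
  split_ifs <;> first | rfl | omega

lemma scs1A_three_mul_of_lt {r : ℕ} (hr : r < 2 * k) (j : ℕ) :
    scs1A k K A r (3 * j) = if r = 2 * j then 2 else 0 := by
  simp only [scs1A, if_pos hr]
  split_ifs <;> first | rfl | omega

lemma scs1A_three_mul_add_one_of_lt {r : ℕ} (hr : r < 2 * k) (j : ℕ) :
    scs1A k K A r (3 * j + 1) = if r = 2 * j + 1 then 1 else 0 := by
  simp only [scs1A, if_pos hr]
  split_ifs <;> first | rfl | omega

lemma scs1A_three_mul_add_two_of_lt {r : ℕ} (hr : r < 2 * k) (j : ℕ) :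
    scs1A k K A r (3 * j + 2) = if r = 2 * j ∨ r = 2 * j + 1 then 1 else 0 := by
  simp only [scs1A, if_pos hr]
  split_ifs <;> first | rfl | omega

lemma scs1A_of_lt_of_le {r c : ℕ} (hr : r < 2 * k) (hc : 3 * k ≤ c) : scs1A k K A r c = 0 := by
  simp only [scs1A, if_pos hr]
  split_ifs <;> first | rfl | omega

lemma scs1A_add_three_mul {j : ℕ} (hj : j < k) (i : ℕ) :
    scs1A k K A (2 * k + i) (3 * j) = if A i j = 1 then 1 else 0 := by
  simp [scs1A, show 3 * j < 3 * k by omega]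

lemma scs1A_add_three_mul_add_one {j : ℕ} (hj : j < k) (i : ℕ) :
    scs1A k K A (2 * k + i) (3 * j + 1) =
      if A i j = K then K / 2 else if A i j = 2 then 1 else 0 := by
  simp [scs1A, show 3 * j + 1 < 3 * k by omega, Nat.add_mod, Nat.add_div]

lemma scs1A_add_three_mul_add_two {j : ℕ} (hj : j < k) (i : ℕ) :
    scs1A k K A (2 * k + i) (3 * j + 2) = 0 := by
  simp [scs1A, show 3 * j + 2 < 3 * k by omega, Nat.add_mod]

lemma scs1A_add_of_le {c : ℕ} (hc : 3 * k ≤ c) (i : ℕ) :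
    scs1A k K A (2 * k + i) c = A i (c - 2 * k) := by
  simp [scs1A, show ¬ c < 3 * k by omega]

end Entries

lemma ResCol.card_filter_eq_le_two {nr : ℕ} {col : ℕ → ℝ} (h : ResCol nr col) {v : ℝ}
    (hv : v = 1 ∨ v = 2) : #{i ∈ range nr | col i = v} ≤ 2 := by
  rcases h with ⟨h01, -, h1⟩ | ⟨-, h12, -⟩
  · refine (card_le_card (monotone_filter_right _ fun i hi h => ?_)).trans h1
    rcases h01 i (mem_range.1 hi) with h0 | h0 <;> rcases hv with rfl | rfl <;> simp_all
  · refine (card_le_card (monotone_filter_right _ fun i _ h => ?_)).trans h12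
    rcases hv with rfl | rfl <;> simp [h]

lemma ResCol.zero_one_of_forall_ne_eight {nr : ℕ} {col : ℕ → ℝ} (h : ResCol nr col)
    (h8 : ∀ i < nr, col i ≠ 8) :
    (∀ i < nr, col i = 0 ∨ col i = 1) ∧ #{i ∈ range nr | col i = 1} ≤ 2 := by
  rcases h with ⟨h01, -, h1⟩ | ⟨h8', -, -⟩
  · exact ⟨h01, h1⟩
  · obtain ⟨i, hi⟩ := card_pos.1 (h8'.symm ▸ one_pos)
    rw [mem_filter, mem_range] at hi
    exact absurd hi.2 (h8 i hi.1)

lemma ResCol.stage1Col {nr : ℕ} {col : ℕ → ℝ} (h : ResCol nr col)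
    (h8 : ∀ i < nr, col i ≠ 8) : Stage1Col nr col := by
  obtain ⟨h01, h1⟩ := h.zero_one_of_forall_ne_eight h8
  refine Or.inl ⟨fun i hi => ?_, ?_, ?_⟩
  · rcases h01 i hi with h | h <;> simp [h]
  · refine (card_le_card (monotone_filter_right _ fun i hi h => ?_)).trans (h1.trans (by norm_num))
    exact (h01 i (mem_range.1 hi)).resolve_left h
  · refine (card_filter_eq_zero_iff.2 fun i hi h => ?_).trans_le zero_le_one
    rcases h01 i (mem_range.1 hi) with h' | h' <;> simp [h'] at h

lemma Stage1Col.zero_append {a b : ℕ} {col : ℕ → ℝ} (h0 : ∀ r < a, col r = 0)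
    (h : Stage1Col b fun i => col (a + i)) : Stage1Col (a + b) col := by
  have hnil (P : ℝ → Prop) [DecidablePred P] (hP : ¬ P 0) : #{r ∈ range a | P (col r)} = 0 :=
    card_filter_eq_zero_iff.2 fun r hr => h0 r (mem_range.1 hr) ▸ hP
  simp only [Stage1Col, card_filter_range_add, forall_lt_add_iff,
    hnil (· ≠ 0) (by simp), hnil (· = 2) (by simp), hnil (· = 4) (by simp),
    hnil (· = 1) (by simp), zero_add]
  refine h.imp (fun h => ⟨⟨fun r hr => by simp [h0 r hr], h.1⟩, h.2⟩)
    (fun h => ⟨h.1, h.2.1, fun r hr => by simp [h0 r hr], h.2.2⟩)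

section Columns

variable {k m j : ℕ} {A : ℕ → ℕ → ℝ}

lemma stage1Col_scs1A_three_mul (K : ℝ) (hj : j < k) (h1 : #{i ∈ range m | A i j = 1} ≤ 2) :
    Stage1Col (2 * k + m) fun r => scs1A k K A r (3 * j) := by
  have htop : #{r ∈ range (2 * k) | scs1A k K A r (3 * j) ≠ 0} ≤ 1 :=
    (card_filter_le_card_of_imp (t := {2 * j}) fun r hr h => by
      rw [scs1A_three_mul_of_lt (mem_range.1 hr)] at h
      simpa using (ite_ne_right_iff.1 h).1).trans_eq (card_singleton _)
  have htop2 : #{r ∈ range (2 * k) | scs1A k K A r (3 * j) = 2} ≤ 1 :=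
    (card_le_card (monotone_filter_right _ fun r _ h => by rw [h]; norm_num)).trans htop
  have hbot : #{i ∈ range m | scs1A k K A (2 * k + i) (3 * j) ≠ 0} ≤ 2 :=
    (card_le_card (monotone_filter_right _ fun i _ h => by
      rw [scs1A_add_three_mul hj] at h; exact (ite_ne_right_iff.1 h).1)).trans h1
  have hbot2 : #{i ∈ range m | scs1A k K A (2 * k + i) (3 * j) = 2} = 0 :=
    card_filter_eq_zero_iff.2 fun i _ => by rw [scs1A_add_three_mul hj]; split_ifs <;> norm_num
  simp only [Stage1Col, card_filter_range_add, forall_lt_add_iff]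
  refine Or.inl ⟨⟨fun r hr => ?_, fun i _ => ?_⟩, by omega, by omega⟩
  · rw [scs1A_three_mul_of_lt hr]; split_ifs <;> simp
  · rw [scs1A_add_three_mul hj]; split_ifs <;> simp

lemma stage1Col_scs1A_three_mul_add_one (hj : j < k) (h8 : #{i ∈ range m | A i j = 8} = 1)
    (h2 : #{i ∈ range m | A i j = 2} ≤ 2) :
    Stage1Col (2 * k + m) fun r => scs1A k 8 A r (3 * j + 1) := by
  have hbot : ∀ i, scs1A k 8 A (2 * k + i) (3 * j + 1) =
      if A i j = 8 then 4 else if A i j = 2 then 1 else 0 := fun i => by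
    rw [scs1A_add_three_mul_add_one hj]; norm_num
  have htop4 : #{r ∈ range (2 * k) | scs1A k 8 A r (3 * j + 1) = 4} = 0 :=
    card_filter_eq_zero_iff.2 fun r hr => by
      rw [scs1A_three_mul_add_one_of_lt (mem_range.1 hr)]; split_ifs <;> norm_num
  have hbot4 : #{i ∈ range m | scs1A k 8 A (2 * k + i) (3 * j + 1) = 4} = 1 :=
    (congrArg card (filter_congr fun i _ => by rw [hbot]; split_ifs <;> simp_all)).trans h8
  have htop1 : #{r ∈ range (2 * k) | scs1A k 8 A r (3 * j + 1) = 1} ≤ 1 :=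
    (card_filter_le_card_of_imp (t := {2 * j + 1}) fun r hr h => by
      rw [scs1A_three_mul_add_one_of_lt (mem_range.1 hr)] at h
      split_ifs at h <;> simp_all).trans_eq (card_singleton _)
  have hbot1 : #{i ∈ range m | scs1A k 8 A (2 * k + i) (3 * j + 1) = 1} ≤ 2 :=
    (card_le_card (monotone_filter_right _ fun i _ h => by
      rw [hbot] at h; split_ifs at h <;> simp_all)).trans h2
  simp only [Stage1Col, card_filter_range_add, forall_lt_add_iff]
  refine Or.inr ⟨by omega, by omega, fun r hr => ?_, fun i _ => ?_⟩
  · rw [scs1A_three_mul_add_one_of_lt hr]; split_ifs <;> simp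
  · rw [hbot]; split_ifs <;> simp

lemma stage1Col_scs1A_three_mul_add_two (K : ℝ) (hj : j < k) :
    Stage1Col (2 * k + m) fun r => scs1A k K A r (3 * j + 2) := by
  have htop : #{r ∈ range (2 * k) | scs1A k K A r (3 * j + 2) ≠ 0} ≤ 2 :=
    (card_filter_le_card_of_imp (t := {2 * j, 2 * j + 1}) fun r hr h => by
      rw [scs1A_three_mul_add_two_of_lt (mem_range.1 hr)] at h
      simpa using (ite_ne_right_iff.1 h).1).trans card_le_two
  have htop2 : #{r ∈ range (2 * k) | scs1A k K A r (3 * j + 2) = 2} = 0 :=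
    card_filter_eq_zero_iff.2 fun r hr => by
      rw [scs1A_three_mul_add_two_of_lt (mem_range.1 hr)]; split_ifs <;> norm_num
  simp only [Stage1Col, card_filter_range_add, forall_lt_add_iff, scs1A_add_three_mul_add_two hj,
    ne_self_iff_false, filter_false, card_empty, add_zero, htop2]
  refine Or.inl ⟨⟨fun r hr => ?_, fun i _ => by simp⟩, htop.trans (by norm_num), by simp⟩
  rw [scs1A_three_mul_add_two_of_lt hr]; split_ifs <;> simp

lemma stage1Col_scs1A_of_le (K : ℝ) {c : ℕ} (hc : 3 * k ≤ c)
    (h : Stage1Col m fun i => A i (c - 2 * k)) :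
    Stage1Col (2 * k + m) fun r => scs1A k K A r c :=
  Stage1Col.zero_append (fun _ hr => scs1A_of_lt_of_le hr hc) (by simpa [scs1A_add_of_le hc])

end Columns

section Rows

variable {k m : ℕ} {K : ℝ} {A : ℕ → ℕ → ℝ}

lemma stage1Row_scs1A_two_mul {j N : ℕ} (hj : j < k) (hN : 3 * j < N) :
    Stage1Row N fun c => scs1A k K A (2 * j) c := by
  simp only [Stage1Row, scs1A_two_mul hj]
  refine Or.inr (Or.inl ⟨?_, ?_, fun c _ => by split_ifs <;> simp⟩)
  · rw [card_eq_one]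
    refine ⟨3 * j, ext fun c => ?_⟩
    simp only [mem_filter, mem_range, mem_singleton]
    split_ifs <;> norm_num <;> omega
  · refine (card_filter_le_card_of_imp (t := {3 * j + 2}) fun c _ h => ?_).trans_eq
      (card_singleton _)
    split_ifs at h <;> simp_all

lemma stage1Row_scs1A_two_mul_add_one {j : ℕ} (hj : j < k) (N : ℕ) :
    Stage1Row N fun c => scs1A k K A (2 * j + 1) c := by
  simp only [Stage1Row, scs1A_two_mul_add_one hj]
  refine Or.inl ⟨fun c _ => by split_ifs <;> simp, ?_⟩
  refine (card_filter_le_card_of_imp (t := {3 * j + 1, 3 * j + 2}) fun c _ h => ?_).trans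
    (card_le_two.trans (by norm_num))
  split_ifs at h <;> simp_all

lemma stage1Row_scs1A_add_of_forall_ne (hkm : k ≤ m) {i : ℕ} (hK : ∀ j < m, A i j ≠ K)
    (h01 : ∀ j, k ≤ j → j < m → A i j = 0 ∨ A i j = 1)
    (h12 : #{j ∈ range m | A i j = 1 ∨ A i j = 2} ≤ 3) :
    Stage1Row (2 * k + m) fun c => scs1A k K A (2 * k + i) c := by
  -- `src c` is the column of `A` that column `c` of `A'` encodes; a `1` at `c` determines `c`
  -- from `src c` and the entry of `A` there.
  set src : ℕ → ℕ := fun c => if c < 3 * k then c / 3 else c - 2 * k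
  set enc : ℕ → ℕ := fun j =>
    if j < k then (if A i j = 1 then 3 * j else 3 * j + 1) else j + 2 * k
  have hone : ∀ c < 2 * k + m, scs1A k K A (2 * k + i) c = 1 →
      src c < m ∧ (A i (src c) = 1 ∨ A i (src c) = 2) ∧ enc (src c) = c := by
    intro c hc h
    rcases lt_or_ge c (3 * k) with hck | hck
    · obtain ⟨j, hj, rfl | rfl | rfl⟩ := exists_eq_three_mul_of_lt hck
      · rw [scs1A_add_three_mul hj] at h
        have hA : A i j = 1 := by by_contra hA; simp [hA] at h
        simp [src, enc, hA, hj, show j < m by omega]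
      · rw [scs1A_add_three_mul_add_one hj, if_neg (hK j (by omega))] at h
        have hA : A i j = 2 := by by_contra hA; simp [hA] at h
        have hj' : (3 * j + 1) / 3 = j := by omega
        simp [src, enc, hA, hj, hj', hck, show j < m by omega]
      · simp [scs1A_add_three_mul_add_two hj] at h
    · rw [scs1A_add_of_le hck] at h
      simp only [src, enc, if_neg (show ¬ c < 3 * k by omega),
        if_neg (show ¬ c - 2 * k < k by omega)]
      exact ⟨by omega, Or.inl h, by omega⟩
  simp only [Stage1Row]
  refine Or.inl ⟨fun c hc => ?_, ?_⟩
  · rcases lt_or_ge c (3 * k) with hck | hck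
    · obtain ⟨j, hj, rfl | rfl | rfl⟩ := exists_eq_three_mul_of_lt hck
      · rw [scs1A_add_three_mul hj]; split_ifs <;> simp
      · rw [scs1A_add_three_mul_add_one hj, if_neg (hK j (by omega))]; split_ifs <;> simp
      · simp [scs1A_add_three_mul_add_two hj]
    · rw [scs1A_add_of_le hck]
      exact h01 _ (by omega) (by omega)
  · refine le_trans (card_le_card_of_injOn src (fun c hc => ?_) ?_) h12
    · rw [mem_coe, mem_filter, mem_range] at hc
      obtain ⟨hsrc, hA, -⟩ := hone c hc.1 hc.2
      simpa [hsrc] using hA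
    · refine Set.LeftInvOn.injOn (f₁' := enc) fun c hc => ?_
      rw [mem_coe, mem_filter, mem_range] at hc
      exact (hone c hc.1 hc.2).2.2

lemma stage1Row_scs1A_add_of_eight (hkm : k ≤ m) {i : ℕ}
    (h08 : ∀ j < m, A i j = 0 ∨ A i j = 8) (h8 : #{j ∈ range m | A i j = 8} = 2)
    (hnoK : ∀ j, k ≤ j → j < m → A i j ≠ 8) :
    Stage1Row (2 * k + m) fun c => scs1A k 8 A (2 * k + i) c := by
  have hfour : {c ∈ range (2 * k + m) | scs1A k 8 A (2 * k + i) c = 4} =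
      {j ∈ range m | A i j = 8}.image fun j => 3 * j + 1 := by
    ext c
    simp only [mem_filter, mem_range, mem_image]
    constructor
    · rintro ⟨hc, h⟩
      rcases lt_or_ge c (3 * k) with hck | hck
      · obtain ⟨j, hj, rfl | rfl | rfl⟩ := exists_eq_three_mul_of_lt hck
        · rw [scs1A_add_three_mul hj] at h; split_ifs at h <;> norm_num at h
        · rw [scs1A_add_three_mul_add_one hj] at h
          split_ifs at h with hA <;> norm_num at h
          exact ⟨j, ⟨by omega, hA⟩, rfl⟩
        · simp [scs1A_add_three_mul_add_two hj] at h
      · rw [scs1A_add_of_le hck] at h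
        rcases h08 (c - 2 * k) (by omega) with hA | hA <;> rw [hA] at h <;> norm_num at h
    · rintro ⟨j, ⟨hjm, hA⟩, rfl⟩
      have hj : j < k := by by_contra hj; exact hnoK j (by omega) hjm hA
      refine ⟨by omega, ?_⟩
      rw [scs1A_add_three_mul_add_one hj, if_pos hA]
      norm_num
  simp only [Stage1Row]
  refine Or.inr (Or.inr ⟨?_, fun c hc => ?_⟩)
  · rw [hfour, card_image_of_injective _ fun a b h => by simpa using h, h8]
  · rcases lt_or_ge c (3 * k) with hck | hck
    · obtain ⟨j, hj, rfl | rfl | rfl⟩ := exists_eq_three_mul_of_lt hck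
      · rcases h08 j (by omega) with hA | hA <;> simp [scs1A_add_three_mul hj, hA]
      · rcases h08 j (by omega) with hA | hA <;> norm_num [scs1A_add_three_mul_add_one hj, hA]
      · simp [scs1A_add_three_mul_add_two hj]
    · rw [scs1A_add_of_le hck]
      rcases h08 (c - 2 * k) (by omega) with hA | hA
      · simp [hA]
      · exact absurd hA (hnoK _ (by omega) (by omega))

end Rows

theorem stmt14 (n m k : ℕ) (A B : ℕ → ℕ → ℝ)
    (hres : RestrictedGame m A B)
    (hin : Scs1Input n m m k 8 A B) :
    (∀ c < 2*k+m, Stage1Col (2*k+m) (fun r => scs1A k 8 A r c)) ∧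
    (∀ r < 2*k+m, Stage1Row (2*k+m) (fun c => scs1A k 8 A r c)) := by
  obtain ⟨hColA, -, hRowA, -⟩ := hres
  obtain ⟨-, -, hkm, -, -, -, -, -, -, hcol8, hnoK⟩ := hin
  refine ⟨fun c hc => ?_, fun r hr => ?_⟩
  · rcases lt_or_ge c (3 * k) with hck | hck
    · obtain ⟨j, hj, rfl | rfl | rfl⟩ := exists_eq_three_mul_of_lt hck
      · exact stage1Col_scs1A_three_mul 8 hj
          ((hColA j (by omega)).card_filter_eq_le_two (Or.inl rfl))
      · exact stage1Col_scs1A_three_mul_add_one hj (hcol8 j hj).1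
          ((hColA j (by omega)).card_filter_eq_le_two (Or.inr rfl))
      · exact stage1Col_scs1A_three_mul_add_two 8 hj
    · exact stage1Col_scs1A_of_le 8 hck
        ((hColA _ (by omega)).stage1Col (hnoK _ (by omega) (by omega)))
  · rcases lt_or_ge r (2 * k) with hrk | hrk
    · obtain ⟨j, hj, rfl | rfl⟩ := exists_eq_two_mul_of_lt hrk
      · exact stage1Row_scs1A_two_mul hj (by omega)
      · exact stage1Row_scs1A_two_mul_add_one hj _
    · obtain ⟨i, rfl⟩ : ∃ i, r = 2 * k + i := ⟨r - 2 * k, by omega⟩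
      have hi : i < m := by omega
      rcases hRowA i hi with ⟨h012, h12⟩ | ⟨h8, h08⟩
      · refine stage1Row_scs1A_add_of_forall_ne hkm (fun j hj h => ?_)
          (fun j hkj hj => ((hColA j hj).zero_one_of_forall_ne_eight (hnoK j hkj hj)).1 i hi) h12
        simpa [h] using h012 j hj
      · exact stage1Row_scs1A_add_of_eight hkm (fun j hj => by simpa using h08 j hj) h8
          (fun j hkj hj => hnoK j hkj hj i hi)
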